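/- Let A be an n×n skew-symmetric matrix with |aᵢₖ| ≤ 1, 0 < ε ≤ 1, 0 < σ < 1, and let the Grigoriadis–Khachiyan process run for T = ⌈3(ln n + ln(1/σ))/ε²⌉ steps, producing x = X(T)/T where X(T) counts how many times each index was sampled. Then with probability at least 1 − σ, every coordinate of A x(T) is at most ε, i.e. Ax ≤ ε·e componentwise. -/

import Mathlib

/-!
Along every history the weights `wᵢ = exp(ε Uᵢ(t)/2)` grow by `exp(ε aᵢₖ/2) ≤ 1 + ε aᵢₖ/2 + ε²/6`
when `k` is sampled. Averaged over `k ~ w/Φ`, the first-order term is `(ε/2Φ) wᵀAw = 0` by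
skew-symmetry, so `E Φ(t+1) ≤ (1 + ε²/6) E Φ(t)` and `E Φ(T) ≤ n exp(Tε²/6)`. A violated
coordinate `(A x)ᵢ > ε` means `Uᵢ(T) > Tε`, hence `Φ(T) ≥ exp(Tε²/2)`; by Markov's inequality this
has probability at most `n exp(-Tε²/3)`, which the choice of `T` makes at most `σ`.
-/

/-- `gkU A t f` is the vector `U(t) = A X(t)` of the Grigoriadis–Khachiyan process,
where `f : Fin t → Fin n` is the history of sampled indices: `U(0) = 0`,
`U(t+1) = U(t) + A e_{k(t)}`. -/
noncomputable def gkU {n : ℕ} (A : Matrix (Fin n) (Fin n) ℝ) :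
    ∀ t : ℕ, (Fin t → Fin n) → Fin n → ℝ
  | 0, _, _ => 0
  | (t + 1), f, i => gkU A t (Fin.init f) i + A i (f (Fin.last t))

/-- The exponential potential `Φ(t) = ∑ᵢ exp(ε Uᵢ(t)/2)`. -/
noncomputable def gkPhi {n : ℕ} (A : Matrix (Fin n) (Fin n) ℝ) (ε : ℝ)
    (t : ℕ) (f : Fin t → Fin n) : ℝ :=
  ∑ i, Real.exp (ε * gkU A t f i / 2)

/-- The sampling probabilities `pᵢ(t) = exp(ε Uᵢ(t)/2)/Φ(t)`. -/
noncomputable def gkP {n : ℕ} (A : Matrix (Fin n) (Fin n) ℝ) (ε : ℝ)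
    (t : ℕ) (f : Fin t → Fin n) (i : Fin n) : ℝ :=
  Real.exp (ε * gkU A t f i / 2) / gkPhi A ε t f

/-- The probability of observing the history `f` of sampled indices. -/
noncomputable def gkProb {n : ℕ} (A : Matrix (Fin n) (Fin n) ℝ) (ε : ℝ) :
    ∀ t : ℕ, (Fin t → Fin n) → ℝ
  | 0, _ => 1
  | (t + 1), f => gkProb A ε t (Fin.init f) * gkP A ε t (Fin.init f) (f (Fin.last t))

/-- `X(T)ᵢ` = number of steps at which index `i` was sampled, so that
`x = X(T)/T` is the output of the algorithm. -/
def gkX {n : ℕ} (T : ℕ) (f : Fin T → Fin n) (i : Fin n) : ℕ :=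
  (Finset.univ.filter (fun s => f s = i)).card


open Finset Matrix

theorem Real.exp_le_one_add_add_two_thirds_mul_sq {x : ℝ} (hx : |x| ≤ 1 / 2) :
    Real.exp x ≤ 1 + x + 2 / 3 * x ^ 2 := by
  have htaylor := Real.exp_bound (hx.trans (by norm_num)) (n := 3) (by norm_num)
  norm_num [sum_range_succ, Nat.factorial] at htaylor
  -- the cubic remainder `|x|³ · 2/9` is at most `x²/9` because `|x| ≤ 1/2`
  have hcube : |x| ^ 3 ≤ 1 / 2 * x ^ 2 := by
    rw [pow_succ, ← sq_abs x]
    nlinarith [abs_nonneg x, sq_nonneg |x|]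
  nlinarith [(abs_sub_le_iff.1 htaylor).1]

theorem Real.le_mul_exp_of_log_add_log_one_div_le {a σ s : ℝ} (ha : 0 < a) (hσ : 0 < σ)
    (h : Real.log a + Real.log (1 / σ) ≤ s) : a ≤ σ * Real.exp s := by
  rw [← Real.log_mul ha.ne' (by positivity), Real.log_le_iff_le_exp (by positivity),
    ← div_eq_mul_one_div, div_le_iff₀ hσ] at h
  linarith

theorem Matrix.dotProduct_mulVec_self_eq_zero_of_transpose_eq_neg {ι R : Type*} [Fintype ι]
    [CommRing R] [NoZeroDivisors R] [CharZero R] {A : Matrix ι ι R} (hA : Aᵀ = -A)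
    (v : ι → R) : v ⬝ᵥ (A *ᵥ v) = 0 := by
  refine CharZero.eq_neg_self_iff.mp ?_
  conv_lhs => rw [dotProduct_mulVec, ← mulVec_transpose, hA]
  rw [neg_mulVec, neg_dotProduct, dotProduct_comm]

theorem Finset.mul_sum_filter_le_sum_mul {ι : Type*} (s : Finset ι) (P : ι → Prop)
    [DecidablePred P] {p g : ι → ℝ} {c : ℝ} (hp : ∀ i ∈ s, 0 ≤ p i) (hg : ∀ i ∈ s, 0 ≤ g i)
    (hPc : ∀ i ∈ s, P i → c ≤ g i) :
    c * ∑ i ∈ s with P i, p i ≤ ∑ i ∈ s, p i * g i := by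
  rw [mul_sum]
  calc ∑ i ∈ s with P i, c * p i ≤ ∑ i ∈ s with P i, p i * g i :=
        sum_le_sum fun i hi => by
          rw [mem_filter] at hi
          rw [mul_comm]
          exact mul_le_mul_of_nonneg_left (hPc i hi.1 hi.2) (hp i hi.1)
    _ ≤ ∑ i ∈ s, p i * g i :=
        sum_le_sum_of_subset_of_nonneg (filter_subset _ _)
          fun i hi _ => mul_nonneg (hp i hi) (hg i hi)

theorem Matrix.sum_sum_mul_exp_le_of_transpose_eq_neg {ι : Type*} [Fintype ι]
    {A : Matrix ι ι ℝ} (hskew : Aᵀ = -A) (hbdd : ∀ i k, |A i k| ≤ 1) {ε : ℝ} (hε : |ε| ≤ 1)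
    {w : ι → ℝ} (hw : ∀ i, 0 ≤ w i) :
    ∑ k, ∑ i, w k * w i * Real.exp (ε * A i k / 2) ≤ (1 + ε ^ 2 / 6) * (∑ i, w i) ^ 2 := by
  have hexp : ∀ i k, Real.exp (ε * A i k / 2) ≤ (1 + ε ^ 2 / 6) + ε / 2 * A i k := by
    intro i k
    have hεA : |ε * A i k| ≤ 1 := by
      rw [abs_mul]; exact mul_le_one₀ hε (abs_nonneg _) (hbdd i k)
    have hsq : ε ^ 2 * A i k ^ 2 ≤ ε ^ 2 := by
      refine mul_le_of_le_one_right (sq_nonneg ε) ?_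
      rw [← sq_abs]
      exact pow_le_one₀ (abs_nonneg _) (hbdd i k)
    have := Real.exp_le_one_add_add_two_thirds_mul_sq (x := ε * A i k / 2)
      (by rw [abs_div, abs_two]; linarith)
    linarith
  have hquad : ∑ k, ∑ i, w k * w i * A i k = 0 := by
    rw [← dotProduct_mulVec_self_eq_zero_of_transpose_eq_neg hskew w, sum_comm]
    simp only [dotProduct, mulVec, mul_sum]
    exact sum_congr rfl fun i _ => sum_congr rfl fun k _ => by ring
  calc ∑ k, ∑ i, w k * w i * Real.exp (ε * A i k / 2)
      ≤ ∑ k, ∑ i, w k * w i * ((1 + ε ^ 2 / 6) + ε / 2 * A i k) :=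
        sum_le_sum fun k _ => sum_le_sum fun i _ =>
          mul_le_mul_of_nonneg_left (hexp i k) (mul_nonneg (hw k) (hw i))
    _ = (1 + ε ^ 2 / 6) * (∑ i, w i) ^ 2 + ε / 2 * ∑ k, ∑ i, w k * w i * A i k := by
        rw [sq (∑ i, w i), sum_mul_sum, mul_sum, mul_sum, ← sum_add_distrib]
        refine sum_congr rfl fun k _ => ?_
        rw [mul_sum, mul_sum, ← sum_add_distrib]
        exact sum_congr rfl fun i _ => by ring
    _ = (1 + ε ^ 2 / 6) * (∑ i, w i) ^ 2 := by rw [hquad, mul_zero, add_zero]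

section GrigoriadisKhachiyan

variable {n : ℕ} (A : Matrix (Fin n) (Fin n) ℝ) (ε : ℝ)

@[simp]
theorem gkU_snoc (t : ℕ) (f : Fin t → Fin n) (k i : Fin n) :
    gkU A (t + 1) (Fin.snoc f k) i = gkU A t f i + A i k := by
  simp [gkU]

@[simp]
theorem gkProb_snoc (t : ℕ) (f : Fin t → Fin n) (k : Fin n) :
    gkProb A ε (t + 1) (Fin.snoc f k) = gkProb A ε t f * gkP A ε t f k := by
  simp [gkProb]

theorem gkPhi_snoc (t : ℕ) (f : Fin t → Fin n) (k : Fin n) :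
    gkPhi A ε (t + 1) (Fin.snoc f k) =
      ∑ i, Real.exp (ε * gkU A t f i / 2) * Real.exp (ε * A i k / 2) := by
  simp only [gkPhi, gkU_snoc, ← Real.exp_add, mul_add, add_div]

theorem gkPhi_nonneg (t : ℕ) (f : Fin t → Fin n) : 0 ≤ gkPhi A ε t f :=
  sum_nonneg fun _ _ => (Real.exp_pos _).le

theorem gkP_nonneg (t : ℕ) (f : Fin t → Fin n) (k : Fin n) : 0 ≤ gkP A ε t f k :=
  div_nonneg (Real.exp_pos _).le (gkPhi_nonneg A ε t f)

theorem sum_gkP (hn : 0 < n) (t : ℕ) (f : Fin t → Fin n) : ∑ k, gkP A ε t f k = 1 := by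
  simp only [gkP, ← sum_div]
  exact div_self (sum_pos (fun _ _ => Real.exp_pos _) ⟨⟨0, hn⟩, mem_univ _⟩).ne'

theorem gkProb_nonneg : ∀ (t : ℕ) (f : Fin t → Fin n), 0 ≤ gkProb A ε t f
  | 0, _ => zero_le_one
  | t + 1, _ => mul_nonneg (gkProb_nonneg t _) (gkP_nonneg A ε t _ _)

theorem sum_gkProb_succ_mul (t : ℕ) (g : (Fin (t + 1) → Fin n) → ℝ) :
    ∑ f, gkProb A ε (t + 1) f * g f =
      ∑ f, gkProb A ε t f * ∑ k, gkP A ε t f k * g (Fin.snoc f k) := by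
  rw [← (Fin.snocEquiv fun _ => Fin n).sum_comp, Fintype.sum_prod_type, sum_comm]
  refine sum_congr rfl fun f _ => ?_
  rw [mul_sum]
  exact sum_congr rfl fun k _ => by simp [Fin.snocEquiv, mul_assoc]

theorem sum_gkProb (hn : 0 < n) : ∀ t : ℕ, ∑ f : Fin t → Fin n, gkProb A ε t f = 1
  | 0 => by simp [gkProb]
  | t + 1 => by
    simpa [sum_gkP A ε hn, sum_gkProb hn t] using sum_gkProb_succ_mul A ε t 1

theorem sum_gkP_mul_gkPhi_snoc_le (hskew : Aᵀ = -A) (hbdd : ∀ i k, |A i k| ≤ 1)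
    (hε : |ε| ≤ 1) (t : ℕ) (f : Fin t → Fin n) :
    ∑ k, gkP A ε t f k * gkPhi A ε (t + 1) (Fin.snoc f k) ≤ (1 + ε ^ 2 / 6) * gkPhi A ε t f := by
  set w : Fin n → ℝ := fun i => Real.exp (ε * gkU A t f i / 2)
  have hΦ : gkPhi A ε t f = ∑ i, w i := rfl
  calc ∑ k, gkP A ε t f k * gkPhi A ε (t + 1) (Fin.snoc f k)
      = (∑ k, ∑ i, w k * w i * Real.exp (ε * A i k / 2)) / gkPhi A ε t f := by
        simp only [gkP, gkPhi_snoc, sum_div, mul_sum]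
        exact sum_congr rfl fun k _ => sum_congr rfl fun i _ => by ring
    _ ≤ (1 + ε ^ 2 / 6) * gkPhi A ε t f ^ 2 / gkPhi A ε t f := by
        rw [hΦ]
        gcongr
        exact sum_sum_mul_exp_le_of_transpose_eq_neg hskew hbdd hε fun _ => (Real.exp_pos _).le
    _ = (1 + ε ^ 2 / 6) * gkPhi A ε t f := by
        rw [mul_div_assoc, sq (gkPhi A ε t f), mul_self_div_self]

theorem sum_gkProb_mul_gkPhi_le (hskew : Aᵀ = -A) (hbdd : ∀ i k, |A i k| ≤ 1)
    (hε : |ε| ≤ 1) (t : ℕ) :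
    ∑ f, gkProb A ε t f * gkPhi A ε t f ≤ n * Real.exp (t * ε ^ 2 / 6) := by
  induction t with
  | zero => simp [gkProb, gkPhi, gkU]
  | succ t ih =>
    rw [sum_gkProb_succ_mul]
    calc ∑ f, gkProb A ε t f * ∑ k, gkP A ε t f k * gkPhi A ε (t + 1) (Fin.snoc f k)
        ≤ ∑ f, gkProb A ε t f * ((1 + ε ^ 2 / 6) * gkPhi A ε t f) :=
          sum_le_sum fun f _ => mul_le_mul_of_nonneg_left
            (sum_gkP_mul_gkPhi_snoc_le A ε hskew hbdd hε t f) (gkProb_nonneg A ε t f)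
      _ = (1 + ε ^ 2 / 6) * ∑ f, gkProb A ε t f * gkPhi A ε t f := by
          rw [mul_sum]; exact sum_congr rfl fun f _ => by ring
      _ ≤ Real.exp (ε ^ 2 / 6) * (n * Real.exp (t * ε ^ 2 / 6)) := by
          refine mul_le_mul ((add_comm _ _).le.trans (Real.add_one_le_exp _)) ih ?_
            (Real.exp_pos _).le
          exact sum_nonneg fun f _ => mul_nonneg (gkProb_nonneg A ε t f) (gkPhi_nonneg A ε t f)
      _ = n * Real.exp ((t + 1 : ℕ) * ε ^ 2 / 6) := by
          rw [mul_left_comm, ← Real.exp_add]; push_cast; ring_nf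

theorem gkU_eq_sum : ∀ (t : ℕ) (f : Fin t → Fin n) (i : Fin n), gkU A t f i = ∑ s, A i (f s)
  | 0, _, _ => by simp [gkU]
  | t + 1, f, i => by
    rw [gkU, gkU_eq_sum t, Fin.sum_univ_castSucc]
    simp [Fin.init]

theorem gkU_eq_mulVec_gkX (t : ℕ) (f : Fin t → Fin n) :
    gkU A t f = A *ᵥ fun k => (gkX t f k : ℝ) := by
  ext i
  rw [gkU_eq_sum, ← sum_fiberwise univ f fun s => A i (f s)]
  simp only [mulVec, dotProduct, gkX]
  refine sum_congr rfl fun k _ => ?_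
  rw [sum_congr rfl fun s hs => by rw [(mem_filter.mp hs).2], sum_const, nsmul_eq_mul, mul_comm]

theorem exp_le_gkPhi_of_lt_mulVec (hε : 0 ≤ ε) (T : ℕ) (f : Fin T → Fin n) (i : Fin n)
    (hi : ε < (A *ᵥ fun k => (gkX T f k : ℝ) / T) i) :
    Real.exp (T * ε ^ 2 / 2) ≤ gkPhi A ε T f := by
  have hU : (A *ᵥ fun k => (gkX T f k : ℝ) / T) i = gkU A T f i / T := by
    simp only [gkU_eq_mulVec_gkX, mulVec, dotProduct, sum_div, mul_div_assoc]
  have hTU : T * ε ≤ gkU A T f i := by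
    rcases T.eq_zero_or_pos with rfl | hT
    · simp [gkU]
    · rw [hU, lt_div_iff₀ (by exact_mod_cast hT)] at hi
      linarith
  calc Real.exp (T * ε ^ 2 / 2) ≤ Real.exp (ε * gkU A T f i / 2) :=
        Real.exp_le_exp.mpr (by nlinarith)
    _ ≤ gkPhi A ε T f :=
        single_le_sum (f := fun j => Real.exp (ε * gkU A T f j / 2))
          (fun _ _ => (Real.exp_pos _).le) (mem_univ i)

end GrigoriadisKhachiyan

theorem grigoriadis_khachiyan_general (n : ℕ) (hn : 1 ≤ n)
    (A : Matrix (Fin n) (Fin n) ℝ)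
    (hskew : A.transpose = -A) (hbdd : ∀ i k, |A i k| ≤ 1)
    (ε σ : ℝ) (hε0 : 0 < ε) (hε1 : ε ≤ 1) (hσ0 : 0 < σ)
    (T : ℕ) (hT : T = ⌈3 * (Real.log n + Real.log (1 / σ)) / ε ^ 2⌉₊) :
    1 - σ ≤
      ∑ f ∈ Finset.univ.filter
          (fun f : Fin T → Fin n =>
            ∀ i, Matrix.mulVec A (fun k => (gkX T f k : ℝ) / T) i ≤ ε),
        gkProb A ε T f := by
  set good := fun f : Fin T → Fin n => ∀ i, (A *ᵥ fun k => (gkX T f k : ℝ) / T) i ≤ ε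
  have hbad : Real.exp (T * ε ^ 2 / 2) * ∑ f with ¬ good f, gkProb A ε T f
      ≤ n * Real.exp (T * ε ^ 2 / 6) := by
    refine (mul_sum_filter_le_sum_mul _ _ (fun f _ => gkProb_nonneg A ε T f)
      (fun f _ => gkPhi_nonneg A ε T f) fun f _ hf => ?_).trans
      (sum_gkProb_mul_gkPhi_le A ε hskew hbdd (abs_le.mpr ⟨by linarith, hε1⟩) T)
    obtain ⟨i, hi⟩ := not_forall.mp hf
    exact exp_le_gkPhi_of_lt_mulVec A ε hε0.le T f i (not_le.mp hi)
  have hTε : Real.log n + Real.log (1 / σ) ≤ T * ε ^ 2 / 3 := by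
    have := hT ▸ Nat.le_ceil (3 * (Real.log n + Real.log (1 / σ)) / ε ^ 2)
    rw [div_le_iff₀ (by positivity)] at this
    linarith
  have hn_le := Real.le_mul_exp_of_log_add_log_one_div_le (by positivity) hσ0 hTε
  have hbad_le : ∑ f with ¬ good f, gkProb A ε T f ≤ σ := by
    refine le_of_mul_le_mul_left (hbad.trans ?_) (Real.exp_pos (T * ε ^ 2 / 2))
    calc (n : ℝ) * Real.exp (T * ε ^ 2 / 6)
        ≤ σ * Real.exp (T * ε ^ 2 / 3) * Real.exp (T * ε ^ 2 / 6) := by gcongr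
      _ = Real.exp (T * ε ^ 2 / 2) * σ := by rw [mul_assoc, ← Real.exp_add]; ring_nf
  have htotal := sum_filter_add_sum_filter_not univ good (gkProb A ε T)
  rw [sum_gkProb A ε hn] at htotal
  linarith

theorem grigoriadis_khachiyan (n : ℕ) (hn : 1 ≤ n)
    (A : Matrix (Fin n) (Fin n) ℝ)
    (hskew : A.transpose = -A) (hbdd : ∀ i k, |A i k| ≤ 1)
    (ε σ : ℝ) (hε0 : 0 < ε) (hε1 : ε ≤ 1) (hσ0 : 0 < σ) (hσ1 : σ < 1)
    (T : ℕ) (hT : T = ⌈3 * (Real.log n + Real.log (1 / σ)) / ε ^ 2⌉₊) :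
    1 - σ ≤
      ∑ f ∈ Finset.univ.filter
          (fun f : Fin T → Fin n =>
            ∀ i, Matrix.mulVec A (fun k => (gkX T f k : ℝ) / T) i ≤ ε),
        gkProb A ε T f :=
  grigoriadis_khachiyan_general n hn A hskew hbdd ε σ hε0 hε1 hσ0 T hT
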